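/- Let f* : [0,1]^d → ℝ with ‖f*‖_{H¹([0,1]^d; ℝ)} < ∞. Then there exist constants c, C > 0, depending only on d and ‖f*‖_{H¹([0,1]^d; ℝ)}, such that for every M ∈ ℕ there is a feedforward ReLU network f_NN ∈ F_NN(d, 1, L, W) with L ≤ c(1 + log M) and W ≤ c·M satisfying ‖f* − f_NN‖_{L^∞([0,1]^d)} ≤ C·M^{−1/d}. -/

import Mathlib

/-!
On the grid `(N⁻¹ℤ)^d ∩ [0,1]^d`, the function
`x ↦ max_p (f*(p) - K ‖x - p‖₁)` is within `2 K d / N` of a `K`-Lipschitz `f*` on the cube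
(a discrete McShane extension). It is a ReLU network: one hidden layer computes all
`|x_i - j/N| = σ(x_i - j/N) + σ(j/N - x_i)`, after which each candidate `f*(p) - K ‖x - p‖₁`
is affine, and a maximum of `m` affine functions costs `⌈log₂ m⌉` layers of width `3m`, since
`max a b = σ(a - b) + σ(b) - σ(-b)` halves the number of candidates per layer.
Taking `N ≈ M^{1/d}` gives the claimed depth, width and error.
-/

noncomputable section

open Real Set

/-- `ℝ^n` with the Euclidean norm. -/
abbrev Euc (n : ℕ) : Type := EuclideanSpace ℝ (Fin n)

/-- An affine layer `x ↦ A x + b`. -/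
def affineLayer {n m : ℕ} (A : Matrix (Fin m) (Fin n) ℝ) (b : Euc m) : Euc n → Euc m :=
  fun x => WithLp.toLp 2 (fun i => (∑ j, A i j * x j) + b i)

/-- Coordinatewise ReLU. -/
def reluV {n : ℕ} (x : Euc n) : Euc n := WithLp.toLp 2 (fun i => max (x i) 0)

/-- `IsFNNExact L din dout W f` : `f` is realized by a feedforward ReLU network with exactly
`L` hidden layers, input dimension `din`, output dimension `dout`, all hidden widths `≤ W`. -/
def IsFNNExact : (L : ℕ) → (din dout W : ℕ) → (Euc din → Euc dout) → Prop
  | 0, din, dout, _, f =>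
      ∃ (A : Matrix (Fin dout) (Fin din) ℝ) (b : Euc dout), f = affineLayer A b
  | L + 1, din, dout, W, f =>
      ∃ m : ℕ, m ≤ W ∧
        ∃ (A : Matrix (Fin m) (Fin din) ℝ) (b : Euc m) (g : Euc m → Euc dout),
          IsFNNExact L m dout W g ∧ f = g ∘ reluV ∘ affineLayer A b

/-- The class `F_NN(din, dout, L, W)`: depth at most `L`, width at most `W`. -/
def MemFNN (din dout L W : ℕ) (f : Euc din → Euc dout) : Prop :=
  ∃ L' ≤ L, IsFNNExact L' din dout W f

/-- Membership in `F_NN(din, dout, L, W)` with real-valued size bounds. -/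
def MemFNNR (din dout : ℕ) (L W : ℝ) (f : Euc din → Euc dout) : Prop :=
  ∃ L' W' : ℕ, (L' : ℝ) ≤ L ∧ (W' : ℝ) ≤ W ∧ IsFNNExact L' din dout W' f

/-- The latent cube `Z([a,b]) = [0,1]^d × [a,b] ⊆ ℝ^{d+1}`. -/
def Zcube (d : ℕ) (a b : ℝ) : Set (Euc (d + 1)) :=
  {z | (∀ i : Fin d, z i.castSucc ∈ Icc (0 : ℝ) 1) ∧ z (Fin.last d) ∈ Icc a b}

/-- Reach of a subset of Euclidean space. -/
def reach {n : ℕ} (M : Set (Euc n)) : ℝ :=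
  sInf {r : ℝ | 0 < r ∧ ∃ x ∈ M, ∃ y ∈ M, x ≠ y ∧ ∃ v : Euc n,
    r = ‖x - v‖ ∧ r = ‖y - v‖ ∧ r = Metric.infDist v M}

/-- The states at time `t`: `M(t) = F(M(0), t)`. -/
def Mt {D : ℕ} (F : Euc D → ℝ → Euc D) (M0 : Set (Euc D)) (t : ℝ) : Set (Euc D) :=
  (fun x => F x t) '' M0

/-- `M([a,b]) = ⋃_{t ∈ [a,b]} M(t)`. -/
def Mab {D : ℕ} (F : Euc D → ℝ → Euc D) (M0 : Set (Euc D)) (a b : ℝ) : Set (Euc D) :=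
  ⋃ t ∈ Icc a b, Mt F M0 t

/-- The windowed composition `(T^{i} ∘ (P^{i})^{∘𝐓_i}) ∘ ⋯ ∘ (T^{1} ∘ (P^{1})^{∘𝐓_1})`
(0-indexed), where `𝐓_j = κ(j+1) − κ(j)`. -/
def weldChain {α : Type*} (P Tc : ℕ → α → α) (κ : ℕ → ℕ) : ℕ → α → α
  | 0 => id
  | j + 1 => (Tc j) ∘ (P j)^[κ (j + 1) - κ j] ∘ weldChain P Tc κ j

/-- The unit cube `[0,1]^d ⊆ ℝ^d`. -/
def unitCube (d : ℕ) : Set (Euc d) := {x | ∀ i, x i ∈ Icc (0 : ℝ) 1}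

open Finset
open scoped NNReal

lemma EuclideanSpace.norm_le_sum_abs {ι : Type*} [Fintype ι] (x : EuclideanSpace ℝ ι) :
    ‖x‖ ≤ ∑ i, |x i| := by
  rw [EuclideanSpace.norm_eq]
  calc √(∑ i, ‖x i‖ ^ 2) ≤ √((∑ i, |x i|) ^ 2) := Real.sqrt_le_sqrt <| by
        simpa only [Real.norm_eq_abs] using sum_sq_le_sq_sum_of_nonneg fun i _ => abs_nonneg (x i)
    _ = ∑ i, |x i| := Real.sqrt_sq (sum_nonneg fun i _ => abs_nonneg _)

lemma exists_abs_sub_div_le {N : ℕ} (hN : 0 < N) {t : ℝ} (ht : t ∈ Set.Icc (0 : ℝ) 1) :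
    ∃ j : Fin (N + 1), |t - j / N| ≤ 1 / N := by
  have hNR : (0 : ℝ) < N := by exact_mod_cast hN
  have hNt : 0 ≤ (N : ℝ) * t := mul_nonneg hNR.le ht.1
  have hle : ⌊(N : ℝ) * t⌋₊ ≤ N := Nat.floor_le_of_le (mul_le_of_le_one_right hNR.le ht.2)
  refine ⟨⟨⌊(N : ℝ) * t⌋₊, Nat.lt_succ_of_le hle⟩, ?_⟩
  have hfl := Nat.floor_le hNt
  have hlt := Nat.lt_floor_add_one ((N : ℝ) * t)
  have hdiv : t - (⌊(N : ℝ) * t⌋₊ : ℝ) / N = ((N : ℝ) * t - ⌊(N : ℝ) * t⌋₊) / N := by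
    field_simp
  dsimp only
  rw [hdiv, abs_div, abs_of_pos hNR, div_le_div_iff_of_pos_right hNR, abs_le]
  constructor <;> linarith

theorem abs_sub_sup'_le_of_lipschitzOnWith {α ι : Type*} [PseudoMetricSpace α] [Fintype ι]
    [Nonempty ι] {s : Set α} {f : α → ℝ} {K : ℝ≥0} (hf : LipschitzOnWith K f s) {g : ι → α}
    (hg : ∀ i, g i ∈ s) {r : α → ι → ℝ} (hr : ∀ x ∈ s, ∀ i, dist x (g i) ≤ r x i) {δ : ℝ}
    (hδ : ∀ x ∈ s, ∃ i, r x i ≤ δ) {x : α} (hx : x ∈ s) :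
    |f x - univ.sup' univ_nonempty (fun i => f (g i) - K * r x i)| ≤ 2 * K * δ := by
  have hcone : ∀ i, |f x - f (g i)| ≤ K * r x i := fun i => by
    rw [← Real.dist_eq]
    exact (hf.dist_le_mul x hx (g i) (hg i)).trans (by gcongr; exact hr x hx i)
  obtain ⟨i₀, hi₀⟩ := hδ x hx
  have hδ₀ : 0 ≤ δ := dist_nonneg.trans ((hr x hx i₀).trans hi₀)
  have hKδ : K * r x i₀ ≤ K * δ := by gcongr
  have hsup_le : univ.sup' univ_nonempty (fun i => f (g i) - K * r x i) ≤ f x :=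
    sup'_le _ _ fun i _ => by linarith [(abs_le.mp (hcone i)).1]
  have hle_sup := le_sup' (fun i => f (g i) - K * r x i) (mem_univ i₀)
  rw [abs_sub_le_iff]
  constructor
  · linarith [(abs_le.mp (hcone i₀)).2]
  · have : (0 : ℝ) ≤ 2 * K * δ := by positivity
    linarith

def affineFunctionals (n : ℕ) : Submodule ℝ (Euc n → ℝ) where
  carrier := {u | ∃ (a : Fin n → ℝ) (b : ℝ), ∀ x, u x = ∑ j, a j * x j + b}
  add_mem' := by
    rintro u v ⟨a, b, hu⟩ ⟨a', b', hv⟩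
    exact ⟨a + a', b + b', fun x => by
      simp only [Pi.add_apply, hu, hv, add_mul, sum_add_distrib]; ring⟩
  zero_mem' := ⟨0, 0, fun x => by simp⟩
  smul_mem' := by
    rintro c u ⟨a, b, hu⟩
    exact ⟨c • a, c * b, fun x => by
      simp only [Pi.smul_apply, smul_eq_mul, hu, mul_add, mul_sum, mul_assoc]⟩

lemma const_mem_affineFunctionals {n : ℕ} (r : ℝ) :
    (fun _ => r : Euc n → ℝ) ∈ affineFunctionals n :=
  ⟨0, r, fun x => by simp⟩

lemma apply_mem_affineFunctionals {n : ℕ} (j : Fin n) :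
    (fun x : Euc n => x j) ∈ affineFunctionals n :=
  ⟨Pi.single j 1, 0, fun x => by simp [Pi.single_apply]⟩

lemma exists_affineLayer_eq {m n : ℕ} (w : Fin m → Euc n → ℝ)
    (hw : ∀ t, w t ∈ affineFunctionals n) :
    ∃ (A : Matrix (Fin m) (Fin n) ℝ) (b : Euc m), ∀ x t, affineLayer A b x t = w t x := by
  choose a b h using hw
  exact ⟨Matrix.of a, WithLp.toLp 2 b, fun x t => (h t x).symm⟩

lemma IsFNNExact.mono {L din dout W W' : ℕ} {f : Euc din → Euc dout} (hW : W ≤ W')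
    (hf : IsFNNExact L din dout W f) : IsFNNExact L din dout W' f := by
  induction L generalizing din f with
  | zero => exact hf
  | succ L ih =>
    obtain ⟨m, hm, A, b, g, hg, rfl⟩ := hf
    exact ⟨m, hm.trans hW, A, b, g, ih hg, rfl⟩

lemma IsFNNExact.comp_relu_affine {ι : Type*} [Fintype ι] {L m n k W : ℕ} (e : ι ≃ Fin m)
    (hm : m ≤ W) {w : ι → Euc n → ℝ} (hw : ∀ i, w i ∈ affineFunctionals n)
    {g : Euc m → Euc k} (hg : IsFNNExact L m k W g) :
    IsFNNExact (L + 1) n k W (fun x => g (WithLp.toLp 2 fun t => max (w (e.symm t) x) 0)) := by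
  obtain ⟨A, b, hAb⟩ := exists_affineLayer_eq (fun t => w (e.symm t)) fun t => hw _
  refine ⟨m, hm, A, b, g, hg, funext fun x => ?_⟩
  simp only [Function.comp_apply, reluV, hAb]

lemma Fin.sup'_univ_eq_sup'_max_pair {α : Type*} [LinearOrder α] {n : ℕ} (hn : 0 < n)
    (v : Fin n → α) (h₁ : (univ : Finset (Fin n)).Nonempty)
    (h₂ : (univ : Finset (Fin ((n + 1) / 2))).Nonempty) :
    univ.sup' h₁ v = univ.sup' h₂ fun j =>
      max (v ⟨2 * j, by omega⟩) (v ⟨min (2 * j + 1) (n - 1), by omega⟩) := by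
  refine le_antisymm (sup'_le _ _ fun i _ => ?_)
    (sup'_le _ _ fun j _ => max_le (le_sup' v (mem_univ _)) (le_sup' v (mem_univ _)))
  refine le_trans ?_ (le_sup' _ (mem_univ ⟨i / 2, by omega⟩))
  rcases Nat.mod_two_eq_zero_or_one i with h | h
  · exact le_max_of_le_left (le_of_eq (congrArg v (Fin.ext (by simp only; omega))))
  · exact le_max_of_le_right (le_of_eq (congrArg v (Fin.ext (by simp only; omega))))

theorem exists_isFNNExact_sup'_fin {m n : ℕ} (hm : (univ : Finset (Fin m)).Nonempty)
    (u : Fin m → Euc n → ℝ) (hu : ∀ i, u i ∈ affineFunctionals n) :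
    ∃ f : Euc n → Euc 1, IsFNNExact (Nat.clog 2 m) n 1 (3 * m) f ∧
      ∀ x, f x 0 = univ.sup' hm (u · x) := by
  induction m using Nat.strong_induction_on generalizing n with
  | _ m ih =>
  have hm0 : 0 < m := Fin.pos_iff_nonempty.mpr (univ_nonempty_iff.mp hm)
  rcases Nat.lt_or_ge m 2 with hm1 | hm2
  · obtain rfl : m = 1 := by omega
    obtain ⟨A, b, hAb⟩ := exists_affineLayer_eq (fun _ : Fin 1 => u 0) fun _ => hu 0
    refine ⟨affineLayer A b, ⟨A, b, rfl⟩, fun x => ?_⟩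
    simp [hAb, Finset.univ_unique]
  set q := (m + 1) / 2
  have hq : (univ : Finset (Fin q)).Nonempty := univ_nonempty_iff.mpr ⟨⟨0, by omega⟩⟩
  let a : Fin q → Fin m := fun j => ⟨2 * j, by omega⟩
  let b : Fin q → Fin m := fun j => ⟨min (2 * j + 1) (m - 1), by omega⟩
  let w : Fin q × Fin 3 → Euc n → ℝ := fun z => ![u (a z.1) - u (b z.1), u (b z.1), -u (b z.1)] z.2
  have hw : ∀ z, w z ∈ affineFunctionals n := by
    rintro ⟨j, s⟩
    fin_cases s
    exacts [sub_mem (hu _) (hu _), hu _, neg_mem (hu _)]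
  let e : Fin q × Fin 3 ≃ Fin (q * 3) := finProdFinEquiv
  let v : Fin q → Euc (q * 3) → ℝ := fun j y => y (e (j, 0)) + y (e (j, 1)) - y (e (j, 2))
  have hv : ∀ j, v j ∈ affineFunctionals (q * 3) := fun j =>
    sub_mem (add_mem (apply_mem_affineFunctionals _) (apply_mem_affineFunctionals _))
      (apply_mem_affineFunctionals _)
  obtain ⟨g, hg, hgv⟩ := ih q (by omega) hq v hv
  have hclog : Nat.clog 2 m = Nat.clog 2 q + 1 := Nat.clog_of_two_le one_lt_two hm2
  refine ⟨_, hclog ▸ (hg.mono (by omega)).comp_relu_affine e (by omega) hw, fun x => ?_⟩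
  have hpair : ∀ j, v j (WithLp.toLp 2 fun t => max (w (e.symm t) x) 0) =
      max (u (a j) x) (u (b j) x) := by
    intro j
    simp only [v, w, Equiv.symm_apply_apply, Matrix.cons_val_zero, Matrix.cons_val_one,
      Matrix.cons_val_two, Matrix.tail_cons, Matrix.head_cons, Pi.sub_apply, Pi.neg_apply]
    set B := u (b j) x
    rw [add_sub_assoc, show max B 0 - max (-B) 0 = B from posPart_sub_negPart B,
      ← max_add_add_right, sub_add_cancel, zero_add]
  rw [hgv, Fin.sup'_univ_eq_sup'_max_pair hm0 _ hm hq]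
  exact sup'_congr hq rfl fun j _ => hpair j

theorem exists_isFNNExact_sup' {ι : Type*} [Fintype ι] {n : ℕ} (hι : (univ : Finset ι).Nonempty)
    (u : ι → Euc n → ℝ) (hu : ∀ i, u i ∈ affineFunctionals n) :
    ∃ f : Euc n → Euc 1, IsFNNExact (Nat.clog 2 (Fintype.card ι)) n 1 (3 * Fintype.card ι) f ∧
      ∀ x, f x 0 = univ.sup' hι (u · x) := by
  let e := Fintype.equivFin ι
  have he : (univ : Finset (Fin (Fintype.card ι))).Nonempty := ⟨e hι.choose, mem_univ _⟩
  obtain ⟨f, hf, hfv⟩ := exists_isFNNExact_sup'_fin he (fun t => u (e.symm t)) fun t => hu _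
  refine ⟨f, hf, fun x => (hfv x).trans (le_antisymm ?_ ?_)⟩
  · exact sup'_le _ _ fun t _ => le_sup' (u · x) (mem_univ _)
  · exact sup'_le _ _ fun i _ => by
      simpa only [Equiv.symm_apply_apply] using le_sup' (fun t => u (e.symm t) x) (mem_univ (e i))

theorem exists_isFNNExact_sup'_sub_mul_sum_abs {d k : ℕ} (T : Fin k → ℝ)
    (c : (Fin d → Fin k) → ℝ) (K : ℝ) (hne : (univ : Finset (Fin d → Fin k)).Nonempty) :
    ∃ f : Euc d → Euc 1,
      IsFNNExact (Nat.clog 2 (k ^ d) + 1) d 1 (max (d * (k * 2)) (3 * k ^ d)) f ∧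
      ∀ x, f x 0 = univ.sup' hne fun p => c p - K * ∑ i, |x i - T (p i)| := by
  let e : Fin d × Fin k × Fin 2 ≃ Fin (d * (k * 2)) := Fintype.equivFinOfCardEq (by simp)
  let w : Fin d × Fin k × Fin 2 → Euc d → ℝ := fun z x => ![x z.1 - T z.2.1, T z.2.1 - x z.1] z.2.2
  have hw : ∀ z, w z ∈ affineFunctionals d := by
    rintro ⟨i, j, s⟩
    fin_cases s
    · exact sub_mem (apply_mem_affineFunctionals i) (const_mem_affineFunctionals _)
    · exact sub_mem (const_mem_affineFunctionals _) (apply_mem_affineFunctionals i)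
  let U : (Fin d → Fin k) → Euc (d * (k * 2)) → ℝ := fun p y =>
    c p - K * ∑ i, (y (e (i, p i, 0)) + y (e (i, p i, 1)))
  have hU : ∀ p, U p ∈ affineFunctionals _ := by
    intro p
    have hUp : U p = (fun _ => c p) - K • ∑ i, ((fun y : Euc (d * (k * 2)) => y (e (i, p i, 0))) +
        fun y => y (e (i, p i, 1))) := by
      ext y
      simp [U, Finset.sum_apply]
    rw [hUp]
    exact sub_mem (const_mem_affineFunctionals _) (Submodule.smul_mem _ K (sum_mem fun i _ =>
      add_mem (apply_mem_affineFunctionals _) (apply_mem_affineFunctionals _)))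
  obtain ⟨g, hg, hgv⟩ := exists_isFNNExact_sup' hne U hU
  simp only [Fintype.card_fun, Fintype.card_fin] at hg
  refine ⟨_, (hg.mono (le_max_right _ _)).comp_relu_affine e (le_max_left _ _) hw, fun x => ?_⟩
  refine (hgv _).trans (sup'_congr hne rfl fun p _ => ?_)
  simp only [U, w, Equiv.symm_apply_apply, Matrix.cons_val_zero, Matrix.cons_val_one,
    ← neg_sub (x _), max_zero_add_max_neg_zero_eq_abs_self]

theorem exists_isFNNExact_approx_of_lipschitzOnWith {d N : ℕ} (hd : 0 < d) (hN : 0 < N)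
    {f : Euc d → ℝ} {K : ℝ≥0} (hf : LipschitzOnWith K f (unitCube d)) :
    ∃ g : Euc d → Euc 1,
      IsFNNExact (Nat.clog 2 ((N + 1) ^ d) + 1) d 1 ((2 * d + 3) * (N + 1) ^ d) g ∧
      ∀ x ∈ unitCube d, |f x - g x 0| ≤ 2 * K * (d / N) := by
  let grid : (Fin d → Fin (N + 1)) → Euc d := fun p => WithLp.toLp 2 fun i => (p i : ℝ) / N
  have hNR : (0 : ℝ) < N := by exact_mod_cast hN
  obtain ⟨g, hg, hgv⟩ := exists_isFNNExact_sup'_sub_mul_sum_abs (fun j => (j : ℝ) / N)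
    (fun p => f (grid p)) K univ_nonempty
  have hwidth : max (d * ((N + 1) * 2)) (3 * (N + 1) ^ d) ≤ (2 * d + 3) * (N + 1) ^ d := by
    have := Nat.le_self_pow hd.ne' (N + 1)
    refine max_le ?_ ?_ <;> nlinarith
  refine ⟨g, hg.mono hwidth, fun x hx => ?_⟩
  rw [hgv]
  refine abs_sub_sup'_le_of_lipschitzOnWith hf (g := grid)
    (r := fun y p => ∑ i, |y i - (p i : ℝ) / N|) (fun p i => ⟨by positivity, ?_⟩) (fun y _ p => ?_)
    (fun y hy => ?_) hx
  · exact div_le_one_of_le₀ (by exact_mod_cast (p i).is_le) hNR.le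
  · rw [dist_eq_norm]
    exact (EuclideanSpace.norm_le_sum_abs _).trans_eq (by simp [grid])
  · choose p hp using fun i => exists_abs_sub_div_le hN (hy i)
    refine ⟨p, (sum_le_sum fun i _ => hp i).trans_eq ?_⟩
    rw [sum_const, card_univ, Fintype.card_fin, nsmul_eq_mul, mul_one_div]

lemma Nat.clog_two_le_one_add_two_mul_log (n : ℕ) : (Nat.clog 2 n : ℝ) ≤ 1 + 2 * Real.log n := by
  have hlog : 0 ≤ Real.log n := Real.log_natCast_nonneg n
  have hlogb : Real.logb 2 n ≤ 2 * Real.log n := by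
    rw [Real.logb, div_le_iff₀ (Real.log_pos one_lt_two)]
    nlinarith [Real.log_two_gt_d9]
  rcases n.eq_zero_or_pos with rfl | hn
  · simp
  rw [← Real.natCeil_logb_natCast, Nat.cast_ofNat]
  linarith [Nat.ceil_lt_add_one (Real.logb_nonneg one_lt_two (Nat.one_le_cast.mpr hn))]

lemma Nat.clog_two_add_one_le_of_le_three_pow_mul {P d M : ℕ} (hP : 0 < P) (hM : 1 ≤ M)
    (hPM : (P : ℝ) ≤ 3 ^ d * M) : (Nat.clog 2 P : ℝ) + 1 ≤ (4 * d + 4) * (1 + Real.log M) := by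
  have hM1 : (1 : ℝ) ≤ M := by exact_mod_cast hM
  have hlogM : 0 ≤ Real.log M := Real.log_nonneg hM1
  have hlog3 : Real.log 3 ≤ 2 := by
    linarith [Real.log_le_sub_one_of_pos (by norm_num : (0 : ℝ) < 3)]
  have hlogP : Real.log P ≤ d * Real.log 3 + Real.log M := by
    calc Real.log P ≤ Real.log (3 ^ d * M) := Real.log_le_log (by exact_mod_cast hP) hPM
      _ = d * Real.log 3 + Real.log M := by
        rw [Real.log_mul (by positivity) (by positivity), Real.log_pow]
  nlinarith [Nat.clog_two_le_one_add_two_mul_log P]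

lemma exists_nat_inv_le_rpow_neg_inv {d M : ℕ} (hd : 0 < d) (hM : 1 ≤ M) :
    ∃ N : ℕ, 0 < N ∧ ((N : ℝ) + 1) ^ d ≤ 3 ^ d * M ∧ 1 / (N : ℝ) ≤ (M : ℝ) ^ (-(1 / (d : ℝ))) := by
  have hM1 : (1 : ℝ) ≤ M := by exact_mod_cast hM
  set α := (M : ℝ) ^ (d : ℝ)⁻¹
  have hα : 1 ≤ α := Real.one_le_rpow hM1 (by positivity)
  refine ⟨⌈α⌉₊, Nat.ceil_pos.mpr (by linarith), ?_, ?_⟩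
  · have hceil := Nat.ceil_lt_add_one (by linarith : 0 ≤ α)
    calc ((⌈α⌉₊ : ℝ) + 1) ^ d ≤ (3 * α) ^ d := pow_le_pow_left₀ (by positivity) (by linarith) d
      _ = 3 ^ d * M := by rw [mul_pow, Real.rpow_inv_natCast_pow (by positivity) hd.ne']
  · rw [one_div, one_div, Real.rpow_neg (by positivity)]
    exact inv_anti₀ (by positivity) (Nat.le_ceil α)

theorem lipschitz_approx_scalar_general (d : ℕ) (hd : 0 < d) (fstar : Euc d → ℝ) (K : ℝ)
    (hlip : ∀ x ∈ unitCube d, ∀ y ∈ unitCube d, |fstar x - fstar y| ≤ K * ‖x - y‖) :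
    ∃ c C : ℝ, 0 < c ∧ 0 < C ∧ ∀ M : ℕ, 1 ≤ M →
      ∃ (L W : ℕ) (f : Euc d → Euc 1),
        (L : ℝ) ≤ c * (1 + Real.log M) ∧ (W : ℝ) ≤ c * M ∧
        MemFNN d 1 L W f ∧
        ∀ x ∈ unitCube d, |fstar x - f x 0| ≤ C * (M : ℝ) ^ (-(1 / (d : ℝ))) := by
  have hf : LipschitzOnWith K.toNNReal fstar (unitCube d) :=
    LipschitzOnWith.of_dist_le' fun x hx y hy => by
      simpa only [dist_eq_norm, Real.norm_eq_abs] using hlip x hx y hy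
  refine ⟨(4 * d + 4) * 3 ^ d, 2 * K.toNNReal * d + 1, by positivity, by positivity, fun M hM => ?_⟩
  obtain ⟨N, hN, hNM, hNinv⟩ := exists_nat_inv_le_rpow_neg_inv hd hM
  obtain ⟨g, hg, herr⟩ := exists_isFNNExact_approx_of_lipschitzOnWith hd hN hf
  refine ⟨_, _, g, ?_, ?_, ⟨_, le_rfl, hg⟩, fun x hx => (herr x hx).trans ?_⟩
  · have hdepth := Nat.clog_two_add_one_le_of_le_three_pow_mul (P := (N + 1) ^ d)
      (by positivity) hM (by push_cast; exact hNM)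
    push_cast at hdepth ⊢
    nlinarith [Real.log_nonneg (Nat.one_le_cast.mpr hM : (1 : ℝ) ≤ M),
      one_le_pow₀ (by norm_num : (1 : ℝ) ≤ 3) (n := d)]
  · push_cast
    calc (2 * d + 3) * ((N : ℝ) + 1) ^ d ≤ (2 * d + 3) * (3 ^ d * M) := by gcongr
      _ ≤ (4 * d + 4) * 3 ^ d * M := by rw [← mul_assoc]; gcongr <;> norm_num
  · calc 2 * K.toNNReal * ((d : ℝ) / N) = 2 * K.toNNReal * d * (1 / N) := by ring
      _ ≤ 2 * K.toNNReal * d * (M : ℝ) ^ (-(1 / (d : ℝ))) := by gcongr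
      _ ≤ (2 * K.toNNReal * d + 1) * (M : ℝ) ^ (-(1 / (d : ℝ))) := by gcongr; linarith

/-- Let `f* : [0,1]^d → ℝ` with finite 1-Hölder norm `K` (that is,
`|f*| ≤ K` and `f*` is `K`-Lipschitz on `[0,1]^d`).  Then there are constants `c, C > 0`
(depending only on `d` and the Hölder norm) such that for every `M ∈ ℕ`, `M ≥ 1`, there is a
feedforward ReLU network `f_NN ∈ F_NN(d, 1, L, W)` with `L ≤ c(1 + log M)`, `W ≤ c·M` and
`‖f* − f_NN‖_{L^∞([0,1]^d)} ≤ C·M^{−1/d}`. -/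
theorem lipschitz_approx_scalar (d : ℕ) (hd : 0 < d) (fstar : Euc d → ℝ) (K : ℝ)
    (hbd : ∀ x ∈ unitCube d, |fstar x| ≤ K)
    (hlip : ∀ x ∈ unitCube d, ∀ y ∈ unitCube d, |fstar x - fstar y| ≤ K * ‖x - y‖) :
    ∃ c C : ℝ, 0 < c ∧ 0 < C ∧ ∀ M : ℕ, 1 ≤ M →
      ∃ (L W : ℕ) (f : Euc d → Euc 1),
        (L : ℝ) ≤ c * (1 + Real.log M) ∧ (W : ℝ) ≤ c * M ∧
        MemFNN d 1 L W f ∧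
        ∀ x ∈ unitCube d, |fstar x - f x 0| ≤ C * (M : ℝ) ^ (-(1 / (d : ℝ))) :=
  lipschitz_approx_scalar_general d hd fstar K hlip
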